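/- arXiv:math/0312522 — 7 statements merged into one kernel-verified Lean document; each statement's English description precedes it below -/
import Mathlib

section
/- The closure operator of a ρ-function is idempotent: for every finite set F of countable ordinals and every natural number p, the p-closure of the p-closure of F equals the p-closure of F, where the p-closure of F is the set of all α ≤ max F such that there exists β ∈ F with α ≤ β and ρ(α,β) ≤ p. -/
/-- The first uncountable ordinal. -/
noncomputable def omega1 : Ordinal := (Cardinal.aleph 1).ord

/-- A ρ-function on ω₁ (with the convention ρ(α,α) = 0). -/
structure IsRhoFunction (ρ : Ordinal → Ordinal → ℕ) : Prop where
  diag : ∀ α : Ordinal, ρ α α = 0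
  sub1 : ∀ α β γ : Ordinal, α < β → β < γ → γ < omega1 → ρ α γ ≤ max (ρ α β) (ρ β γ)
  sub2 : ∀ α β γ : Ordinal, α < β → β < γ → γ < omega1 → ρ α β ≤ max (ρ α γ) (ρ β γ)
  finite_below : ∀ β : Ordinal, β < omega1 → ∀ n : ℕ,
    {α : Ordinal | α < β ∧ ρ α β ≤ n}.Finite

/-- The p-closure of a set `F`: all α with some β ∈ F, α ≤ β and ρ(α,β) ≤ p. -/
def rhoCl (ρ : Ordinal → Ordinal → ℕ) (F : Set Ordinal) (p : ℕ) : Set Ordinal :=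
  {α : Ordinal | ∃ β ∈ F, α ≤ β ∧ ρ α β ≤ p}

/-- the p-closure operator of a ρ-function is idempotent. -/
theorem rhoCl_idem (ρ : Ordinal → Ordinal → ℕ) (hρ : IsRhoFunction ρ)
    (F : Set Ordinal) (hFfin : F.Finite) (hFsub : F ⊆ Set.Iio omega1) (p : ℕ) :
    rhoCl ρ (rhoCl ρ F p) p = rhoCl ρ F p := by
  ext α
  constructor
  · rintro ⟨β, ⟨γ, hγF, hβγ, hρβγ⟩, hαβ, hραβ⟩
    rcases eq_or_lt_of_le hαβ with rfl | hαβ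
    · exact ⟨γ, hγF, hβγ, hρβγ⟩
    rcases eq_or_lt_of_le hβγ with rfl | hβγ
    · exact ⟨β, hγF, le_of_lt hαβ, hραβ⟩
    exact ⟨γ, hγF, le_of_lt (hαβ.trans hβγ),
      (hρ.sub1 α β γ hαβ hβγ (hFsub hγF)).trans (max_le hραβ hρβγ)⟩
  · rintro ⟨β, hβF, hαβ, hραβ⟩
    exact ⟨α, ⟨β, hβF, hαβ, hραβ⟩, le_refl α, by simp [hρ.diag α]⟩
end

section
/- Let ρ be a ρ-function, F ⊆ ω₁ a finite set, and p ≥ p_F where p_F = max{ρ(α,β) : α, β ∈ F}. Then the maximum value of ρ on pairs from the p-closure of F is at most p, i.e., p_{cl(F,p)} ≤ p. -/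
/-- if p ≥ p_F, then p_{cl(F,p)} ≤ p. -/
theorem pCl_le (ρ : Ordinal → Ordinal → ℕ) (hρ : IsRhoFunction ρ)
    (F : Set Ordinal) (hFfin : F.Finite) (hFsub : F ⊆ Set.Iio omega1) (p : ℕ)
    (hpF : ∀ α ∈ F, ∀ β ∈ F, α ≤ β → ρ α β ≤ p) :
    ∀ α ∈ rhoCl ρ F p, ∀ β ∈ rhoCl ρ F p, α ≤ β → ρ α β ≤ p := by
  rintro α ⟨a, haF, hαa, hρa⟩ β ⟨b, hbF, hβb, hρb⟩ hαβ
  have ha1 : a < omega1 := hFsub haF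
  have hb1 : b < omega1 := hFsub hbF
  have hβ1 : β < omega1 := lt_of_le_of_lt hβb hb1
  -- key : for c ∈ F with β ≤ c, ρ β c ≤ p
  have key : ∀ c ∈ F, β ≤ c → ρ β c ≤ p := by
    intro c hcF hβc
    rcases eq_or_lt_of_le hβb with hb | hb
    · exact hpF β (hb ▸ hbF) c hcF hβc
    · rcases lt_trichotomy c b with h | h | h
      · rcases eq_or_lt_of_le hβc with h' | h'
        · rw [← h', hρ.diag]; exact Nat.zero_le p
        · exact le_trans (hρ.sub2 β c b h' h hb1)
            (max_le hρb (hpF c hcF b hbF h.le))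
      · exact h ▸ hρb
      · exact le_trans (hρ.sub1 β b c hb h (hFsub hcF))
          (max_le hρb (hpF b hbF c hcF h.le))
  -- key' : for c ∈ F with c < β, ρ c β ≤ p
  have key' : ∀ c ∈ F, c < β → ρ c β ≤ p := by
    intro c hcF hcβ
    rcases eq_or_lt_of_le hβb with hb | hb
    · exact hb ▸ hpF c hcF b hbF (hb ▸ hcβ.le)
    · exact le_trans (hρ.sub2 c β b hcβ hb hb1)
        (max_le (hpF c hcF b hbF (hcβ.trans hb).le) hρb)
  rcases eq_or_lt_of_le hαβ with h | hαβ'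
  · rw [h, hρ.diag]; exact Nat.zero_le p
  rcases lt_trichotomy a β with h | h | h
  · rcases eq_or_lt_of_le hαa with h' | h'
    · exact h' ▸ key' a haF h
    · exact le_trans (hρ.sub1 α a β h' h hβ1) (max_le hρa (key' a haF h))
  · exact h ▸ hρa
  · exact le_trans (hρ.sub2 α β a hαβ' h ha1) (max_le hρa (key a haF h.le))
end

section
/- Let ρ be a ρ-function, F, G ⊆ ω₁ finite sets, p ≥ max{p_F, p_G}. If α ∈ F ∩ G, then cl(F ∩ (α+1), p) = cl(G ∩ (α+1), p). Consequently, if F and G are p-closed, then F ∩ (α+1) = G ∩ (α+1) for every α ∈ F ∩ G. -/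
/-- for α ∈ F ∩ G, cl(F ∩ (α+1), p) = cl(G ∩ (α+1), p); consequently if F and G
are p-closed then F ∩ (α+1) = G ∩ (α+1). (Here the set of ordinals < α+1 is `Set.Iic α`.) -/
theorem rhoCl_inter_Iic_eq (ρ : Ordinal → Ordinal → ℕ) (hρ : IsRhoFunction ρ)
    (F G : Set Ordinal) (hFfin : F.Finite) (hGfin : G.Finite)
    (hFsub : F ⊆ Set.Iio omega1) (hGsub : G ⊆ Set.Iio omega1) (p : ℕ)
    (hpF : ∀ α ∈ F, ∀ β ∈ F, α ≤ β → ρ α β ≤ p)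
    (hpG : ∀ α ∈ G, ∀ β ∈ G, α ≤ β → ρ α β ≤ p) :
    (∀ a ∈ F ∩ G, rhoCl ρ (F ∩ Set.Iic a) p = rhoCl ρ (G ∩ Set.Iic a) p) ∧
    (rhoCl ρ F p = F → rhoCl ρ G p = G →
      ∀ a ∈ F ∩ G, F ∩ Set.Iic a = G ∩ Set.Iic a) := by
  -- Key: for a ∈ F, rhoCl (F ∩ Iic a) p = {x | x ≤ a ∧ ρ x a ≤ p}
  have key : ∀ (H : Set Ordinal), H ⊆ Set.Iio omega1 →
      (∀ α ∈ H, ∀ β ∈ H, α ≤ β → ρ α β ≤ p) → ∀ a ∈ H,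
      rhoCl ρ (H ∩ Set.Iic a) p = {x | x ≤ a ∧ ρ x a ≤ p} := by
    intro H hHsub hpH a haH
    ext x
    constructor
    · rintro ⟨β, ⟨hβH, hβa⟩, hxβ, hρxβ⟩
      have hβa' : β ≤ a := hβa
      refine ⟨hxβ.trans hβa', ?_⟩
      rcases hxβ.lt_or_eq with hxβ' | rfl
      · rcases hβa'.lt_or_eq with hβa'' | rfl
        · exact le_trans (hρ.sub1 x β a hxβ' hβa'' (hHsub haH))
            (max_le hρxβ (hpH β hβH a haH hβa'))
        · exact hρxβ
      · rcases hβa'.lt_or_eq with _ | rfl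
        · exact hpH x hβH a haH hβa'
        · exact hρxβ
    · rintro ⟨hxa, hρxa⟩
      exact ⟨a, ⟨haH, le_refl a⟩, hxa, hρxa⟩
  have main : ∀ a ∈ F ∩ G, rhoCl ρ (F ∩ Set.Iic a) p = rhoCl ρ (G ∩ Set.Iic a) p := by
    rintro a ⟨haF, haG⟩
    rw [key F hFsub hpF a haF, key G hGsub hpG a haG]
  refine ⟨main, ?_⟩
  intro hFcl hGcl a ha
  have sub : ∀ (H : Set Ordinal), rhoCl ρ H p = H → a ∈ H →
      H ∩ Set.Iic a = rhoCl ρ (H ∩ Set.Iic a) p := by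
    intro H hHcl haH
    apply Set.Subset.antisymm
    · rintro x ⟨hxH, hxa⟩
      exact ⟨x, ⟨hxH, hxa⟩, le_refl x, by rw [hρ.diag]; exact Nat.zero_le p⟩
    · rintro x ⟨β, ⟨hβH, hβa⟩, hxβ, hρxβ⟩
      refine ⟨?_, hxβ.trans hβa⟩
      rw [← hHcl]
      exact ⟨β, hβH, hxβ, hρxβ⟩
  rw [sub F hFcl ha.1, sub G hGcl ha.2, main a ha]
end

section
/- If a function ρ : [ω₁]² → ω satisfies the two ρ-function inequalities and the finiteness condition, then the derived function ρ̄ defined by ρ̄(α,β) = max{ρ(α,β), #{ξ ≤ α : ρ(ξ,α) ≤ ρ(α,β)}} satisfies the unboundedness property: for every n < ω and every infinite set M ⊆ ω₁, there exist α < β in M with ρ̄(α,β) > n. -/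
/-- the derived function ρ̄(α,β) = max{ρ(α,β), #{ξ ≤ α : ρ(ξ,α) ≤ ρ(α,β)}}
satisfies the unboundedness property 3'. -/
theorem rhoBar_unbounded (ρ : Ordinal → Ordinal → ℕ) (hρ : IsRhoFunction ρ) :
    ∀ n : ℕ, ∀ M : Set Ordinal, M ⊆ Set.Iio omega1 → M.Infinite →
      ∃ α ∈ M, ∃ β ∈ M, α < β ∧
        n < max (ρ α β) ({ξ : Ordinal | ξ ≤ α ∧ ρ ξ α ≤ ρ α β}.ncard) := by
  intro n M hM hMinf
  by_cases h : ∃ α ∈ M, ∃ β ∈ M, α < β ∧ n < ρ α β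
  · obtain ⟨α, hα, β, hβ, hlt, hn⟩ := h
    exact ⟨α, hα, β, hβ, hlt, lt_of_lt_of_le hn (le_max_left _ _)⟩
  push_neg at h
  obtain ⟨t, htM, htcard⟩ := hMinf.exists_subset_card_eq ((n+1)*(n+1)+2)
  have htne : t.Nonempty := by
    rw [← Finset.card_pos, htcard]; positivity
  set β := t.max' htne with hβdef
  have hβM : β ∈ M := htM (t.max'_mem htne)
  have hβω : β < omega1 := hM hβM
  set S := t.erase β with hSdef
  have hScard : S.card = (n+1)*(n+1)+1 := by
    rw [hSdef, Finset.card_erase_of_mem (t.max'_mem htne), htcard]; omega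
  have hSlt : ∀ α ∈ S, α < β := fun α hα =>
    lt_of_le_of_ne (t.le_max' α (Finset.mem_of_mem_erase hα)) (Finset.ne_of_mem_erase hα)
  have hSn : ∀ α ∈ S, ρ α β ≤ n := fun α hα =>
    h α (htM (Finset.mem_of_mem_erase hα)) β hβM (hSlt α hα)
  have hpig : ∃ p ∈ Finset.range (n+1), n+1 < (S.filter (fun α => ρ α β = p)).card := by
    apply Finset.exists_lt_card_fiber_of_mul_lt_card_of_maps_to
    · intro α hα; exact Finset.mem_range.mpr (Nat.lt_succ_of_le (hSn α hα))
    · rw [hScard, Finset.card_range]; omega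
  obtain ⟨p, _, hTcard⟩ := hpig
  set T := S.filter (fun α => ρ α β = p) with hTdef
  have hTne : T.Nonempty := Finset.card_pos.mp (by omega)
  set α := T.max' hTne with hαdef
  have hαT : α ∈ T := T.max'_mem hTne
  have hαS : α ∈ S := Finset.mem_of_mem_filter _ hαT
  have hαM : α ∈ M := htM (Finset.mem_of_mem_erase hαS)
  have hαβ : α < β := hSlt α hαS
  have hαω : α < omega1 := hM hαM
  have hραβ : ρ α β = p := by
    have := Finset.mem_filter.mp hαT
    exact this.2
  refine ⟨α, hαM, β, hβM, hαβ, lt_of_lt_of_le ?_ (le_max_right _ _)⟩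
  have hfin : {ξ : Ordinal | ξ ≤ α ∧ ρ ξ α ≤ ρ α β}.Finite := by
    apply Set.Finite.subset ((hρ.finite_below α hαω (ρ α β)).union (Set.finite_singleton α))
    rintro ξ ⟨hle, hρξ⟩
    rcases lt_or_eq_of_le hle with h' | h'
    · exact Or.inl ⟨h', hρξ⟩
    · exact Or.inr (by simp [h'])
  have hsub : (↑T : Set Ordinal) ⊆ {ξ : Ordinal | ξ ≤ α ∧ ρ ξ α ≤ ρ α β} := by
    intro ξ hξ
    have hξT : ξ ∈ T := hξ
    have hξp : ρ ξ β = p := (Finset.mem_filter.mp hξT).2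
    have hξα : ξ ≤ α := T.le_max' ξ hξT
    refine ⟨hξα, ?_⟩
    rcases lt_or_eq_of_le hξα with h' | h'
    · calc ρ ξ α ≤ max (ρ ξ β) (ρ α β) := hρ.sub2 ξ α β h' hαβ hβω
        _ = ρ α β := by rw [hξp, hραβ]; simp
    · rw [h', hρ.diag]; exact Nat.zero_le _
  have hle := Set.ncard_le_ncard hsub hfin
  rw [Set.ncard_coe_finset] at hle
  omega
end

section
/- Let y be a C-ℓ₁ᵏ-average, i.e. y = (x_1 + ⋯ + x_k)/k for a finite block sequence x_1 < ⋯ < x_k with ‖x_i‖ ≤ C and ‖y‖ = 1. Then for any successive intervals E_1 < ⋯ < E_n with n < k, one has ∑_{i=1}^n ‖E_i y‖ ≤ C(1 + 2n/k), where E_i y denotes the restriction of y to the interval E_i. -/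
/-- An interval of ordinals. -/
def IsOrdInterval (I : Set Ordinal) : Prop :=
  ∀ a ∈ I, ∀ b ∈ I, ∀ c : Ordinal, a ≤ c → c ≤ b → c ∈ I

/-- A transfinite Schauder basis `(vec α)_{α<γ}` of a normed space `X`, encoded together with
its uniformly bounded interval projections. -/
structure TransfiniteBasis (γ : Ordinal) (X : Type*) [NormedAddCommGroup X]
    [NormedSpace ℝ X] where
  vec : Ordinal → X
  proj : Set Ordinal → (X →L[ℝ] X)
  C : ℝ
  one_le_C : 1 ≤ C
  vec_ne_zero : ∀ α : Ordinal, α < γ → vec α ≠ 0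
  total : Submodule.topologicalClosure (Submodule.span ℝ (vec '' Set.Iio γ)) = ⊤
  norm_proj_le : ∀ I : Set Ordinal, IsOrdInterval I → ‖proj I‖ ≤ C
  proj_apply_mem : ∀ I : Set Ordinal, IsOrdInterval I → ∀ α : Ordinal, α < γ → α ∈ I →
    proj I (vec α) = vec α
  proj_apply_not_mem : ∀ I : Set Ordinal, IsOrdInterval I → ∀ α : Ordinal, α < γ → α ∉ I →
    proj I (vec α) = 0

/-!
Write `y = k⁻¹ ∑ xᵢ`. Since the basis is bimonotone, `‖Eⱼ xᵢ‖ ≤ C` when the support of `xᵢ`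
meets `Eⱼ` and `Eⱼ xᵢ = 0` otherwise, so `‖Eⱼ y‖ ≤ C mⱼ / k` with `mⱼ` the number of blocks
meeting `Eⱼ`. A block contained in some `Eⱼ` lies in no other one, while among the blocks meeting
`Eⱼ` only the first and the last can stick out of it; hence `∑ⱼ mⱼ ≤ k + 2n`.
-/

open Finset

theorem IsOrdInterval.ordConnected {I : Set Ordinal} (hI : IsOrdInterval I) : I.OrdConnected :=
  ⟨fun _ ha _ hb _ hc => hI _ ha _ hb _ hc.1 hc.2⟩

def IsBlockSeq {α : Type*} [LinearOrder α] (F : ℕ → Set α) (k : ℕ) : Prop :=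
  ∀ i j, i < j → j < k → ∀ a ∈ F i, ∀ b ∈ F j, a < b

namespace IsBlockSeq

variable {α : Type*} [LinearOrder α] {F : ℕ → Set α} {k : ℕ}

theorem subset_of_lt_of_lt (hF : IsBlockSeq F k) {E : Set α} (hE : E.OrdConnected)
    {i₁ i i₂ : ℕ} (h₁ : i₁ < i) (h₂ : i < i₂) (hi₂ : i₂ < k)
    (hF₁ : (F i₁ ∩ E).Nonempty) (hF₂ : (F i₂ ∩ E).Nonempty) : F i ⊆ E := by
  obtain ⟨a, haF, haE⟩ := hF₁
  obtain ⟨b, hbF, hbE⟩ := hF₂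
  exact fun c hc => hE.out haE hbE
    ⟨(hF _ _ h₁ (h₂.trans hi₂) a haF c hc).le, (hF _ _ h₂ hi₂ c hc b hbF).le⟩

theorem pairwiseDisjoint (hF : IsBlockSeq F k) :
    ((range k : Finset ℕ) : Set ℕ).PairwiseDisjoint F := by
  intro i hi j hj hij
  simp only [coe_range, Set.mem_Iio] at hi hj
  refine Set.disjoint_left.mpr fun a hai haj => ?_
  rcases hij.lt_or_gt with h | h
  · exact (hF i j h hj a hai a haj).false
  · exact (hF j i h hi a haj a hai).false

open scoped Classical in
theorem card_meets_not_subset_le_two (hF : IsBlockSeq F k) {E : Set α} (hE : E.OrdConnected) :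
    #{i ∈ range k | (F i ∩ E).Nonempty ∧ ¬ F i ⊆ E} ≤ 2 := by
  set T := {i ∈ range k | (F i ∩ E).Nonempty}
  rcases T.eq_empty_or_nonempty with hT | hT
  · refine (card_eq_zero.mpr ?_).trans_le zero_le_two
    simp_all [T, filter_eq_empty_iff]
  have hends : {i ∈ range k | (F i ∩ E).Nonempty ∧ ¬ F i ⊆ E} ⊆ {T.min' hT, T.max' hT} := by
    intro i hi
    simp only [mem_filter, mem_range] at hi
    obtain ⟨hik, hiE, hiNot⟩ := hi
    have hiT : i ∈ T := mem_filter.mpr ⟨mem_range.mpr hik, hiE⟩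
    have hmin := mem_filter.mp (T.min'_mem hT)
    have hmax := mem_filter.mp (T.max'_mem hT)
    by_contra hne
    simp only [mem_insert, mem_singleton, not_or] at hne
    exact hiNot (hF.subset_of_lt_of_lt hE ((T.min'_le i hiT).lt_of_ne' hne.1)
      ((T.le_max' i hiT).lt_of_ne hne.2) (mem_range.mp hmax.1) hmin.2 hmax.2)
  exact (card_le_card hends).trans (card_insert_le _ _)

open scoped Classical in
theorem sum_card_meets_subset_le {E : ℕ → Set α} {n : ℕ} (hE : IsBlockSeq E n) :
    ∑ j ∈ range n, #{i ∈ range k | (F i ∩ E j).Nonempty ∧ F i ⊆ E j} ≤ k := by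
  have hdisj : ((range n : Finset ℕ) : Set ℕ).PairwiseDisjoint
      fun j => {i ∈ range k | (F i ∩ E j).Nonempty ∧ F i ⊆ E j} := by
    intro j hj j' hj' hjj'
    refine disjoint_left.mpr fun i hi hi' => ?_
    obtain ⟨a, haF, haE⟩ := (mem_filter.mp hi).2.1
    exact Set.disjoint_left.mp (hE.pairwiseDisjoint hj hj' hjj') haE
      ((mem_filter.mp hi').2.2 haF)
  rw [← card_biUnion hdisj]
  exact (card_le_card (biUnion_subset.mpr fun _ _ => filter_subset _ _)).trans_eq (card_range k)

open scoped Classical in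
theorem sum_card_meets_le (hF : IsBlockSeq F k) {E : ℕ → Set α} {n : ℕ} (hE : IsBlockSeq E n)
    (hEc : ∀ j < n, (E j).OrdConnected) :
    ∑ j ∈ range n, #{i ∈ range k | (F i ∩ E j).Nonempty} ≤ k + 2 * n :=
  calc ∑ j ∈ range n, #{i ∈ range k | (F i ∩ E j).Nonempty}
      = ∑ j ∈ range n, (#{i ∈ range k | (F i ∩ E j).Nonempty ∧ F i ⊆ E j}
          + #{i ∈ range k | (F i ∩ E j).Nonempty ∧ ¬ F i ⊆ E j}) :=
        sum_congr rfl fun j _ => by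
          rw [← card_filter_add_card_filter_not (fun i => F i ⊆ E j), filter_filter, filter_filter]
    _ = ∑ j ∈ range n, #{i ∈ range k | (F i ∩ E j).Nonempty ∧ F i ⊆ E j}
          + ∑ j ∈ range n, #{i ∈ range k | (F i ∩ E j).Nonempty ∧ ¬ F i ⊆ E j} :=
        sum_add_distrib
    _ ≤ k + ∑ _j ∈ range n, 2 :=
        add_le_add hE.sum_card_meets_subset_le
          (sum_le_sum fun j hj => hF.card_meets_not_subset_le_two (hEc j (mem_range.mp hj)))
    _ = k + 2 * n := by rw [sum_const, card_range, smul_eq_mul, mul_comm]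

end IsBlockSeq

namespace TransfiniteBasis

variable {γ : Ordinal} {X : Type*} [NormedAddCommGroup X] [NormedSpace ℝ X]
  (B : TransfiniteBasis γ X)

theorem proj_eq_zero_of_mem_span {I S : Set Ordinal} (hI : IsOrdInterval I)
    (hS : S ⊆ Set.Iio γ) (hSI : Disjoint S I) {z : X}
    (hz : z ∈ Submodule.span ℝ (B.vec '' S)) : B.proj I z = 0 := by
  refine (Submodule.span_le (p := LinearMap.ker (B.proj I : X →ₗ[ℝ] X))).mpr ?_ hz
  rintro _ ⟨a, ha, rfl⟩
  exact B.proj_apply_not_mem I hI a (hS ha) (Set.disjoint_left.mp hSI ha)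

theorem norm_proj_apply_le (hB : B.C = 1) {I : Set Ordinal} (hI : IsOrdInterval I) (z : X) :
    ‖B.proj I z‖ ≤ ‖z‖ := by
  have hnorm := B.norm_proj_le I hI
  rw [hB] at hnorm
  simpa using (B.proj I).le_of_opNorm_le hnorm z

open scoped Classical in
theorem norm_proj_sum_le (hB : B.C = 1) {I : Set Ordinal} (hI : IsOrdInterval I) {k : ℕ}
    {x : ℕ → X} {F : ℕ → Set Ordinal} {C : ℝ} (hFγ : ∀ i < k, F i ⊆ Set.Iio γ)
    (hx : ∀ i < k, x i ∈ Submodule.span ℝ (B.vec '' F i)) (hxC : ∀ i < k, ‖x i‖ ≤ C) :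
    ‖B.proj I (∑ i ∈ range k, x i)‖ ≤ #{i ∈ range k | (F i ∩ I).Nonempty} * C := by
  have hvanish : ∀ i ∈ range k, ‖B.proj I (x i)‖ ≠ 0 → (F i ∩ I).Nonempty := by
    intro i hi hne
    by_contra hempty
    rw [Set.not_nonempty_iff_eq_empty, ← Set.disjoint_iff_inter_eq_empty] at hempty
    exact hne (by rw [B.proj_eq_zero_of_mem_span hI (hFγ i (mem_range.mp hi)) hempty
      (hx i (mem_range.mp hi)), norm_zero])
  calc ‖B.proj I (∑ i ∈ range k, x i)‖ ≤ ∑ i ∈ range k, ‖B.proj I (x i)‖ := by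
        rw [map_sum]; exact norm_sum_le _ _
    _ = ∑ i ∈ range k with (F i ∩ I).Nonempty, ‖B.proj I (x i)‖ :=
        (sum_filter_of_ne hvanish).symm
    _ ≤ #{i ∈ range k | (F i ∩ I).Nonempty} • C := by
        refine sum_le_card_nsmul _ _ _ fun i hi => ?_
        exact (B.norm_proj_apply_le hB hI _).trans (hxC i (mem_range.mp (mem_filter.mp hi).1))
    _ = _ := nsmul_eq_mul _ _

end TransfiniteBasis

theorem ell1_average_interval_estimate_general {X : Type*} [NormedAddCommGroup X] [NormedSpace ℝ X]
    (γ : Ordinal) (B : TransfiniteBasis γ X) (hbimonotone : B.C = 1)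
    (k n : ℕ) (hk : 0 < k)
    (x : ℕ → X) (F : ℕ → Finset Ordinal) (C : ℝ)
    (hFsub : ∀ i, i < k → ↑(F i) ⊆ Set.Iio γ)
    (hFblock : ∀ i j : ℕ, i < j → j < k → ∀ a ∈ F i, ∀ b ∈ F j, a < b)
    (hxspan : ∀ i, i < k → x i ∈ Submodule.span ℝ (B.vec '' ↑(F i)))
    (hxC : ∀ i, i < k → ‖x i‖ ≤ C)
    (y : X) (hy : y = (k : ℝ)⁻¹ • ∑ i ∈ Finset.range k, x i)
    (E : ℕ → Set Ordinal) (hE : ∀ i, i < n → IsOrdInterval (E i))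
    (hEblock : ∀ i j : ℕ, i < j → j < n → ∀ a ∈ E i, ∀ b ∈ E j, a < b) :
    ∑ i ∈ Finset.range n, ‖B.proj (E i) y‖ ≤ C * (1 + 2 * (n : ℝ) / (k : ℝ)) := by
  classical
  set meets : ℕ → ℕ := fun j => #{i ∈ range k | ((F i : Set Ordinal) ∩ E j).Nonempty}
  have hC : 0 ≤ C := (norm_nonneg _).trans (hxC 0 hk)
  have hk' : (0 : ℝ) < k := Nat.cast_pos.mpr hk
  have hproj : ∀ j ∈ range n, ‖B.proj (E j) y‖ ≤ C * meets j / k := by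
    intro j hj
    rw [hy, map_smul, norm_smul, norm_inv, Real.norm_natCast, inv_mul_le_iff₀ hk',
      mul_div_cancel₀ _ hk'.ne', mul_comm]
    exact B.norm_proj_sum_le hbimonotone (hE j (mem_range.mp hj)) hFsub hxspan hxC
  have hcount : ∑ j ∈ range n, (meets j : ℝ) ≤ k + 2 * n := by
    exact_mod_cast IsBlockSeq.sum_card_meets_le (F := fun i => (F i : Set Ordinal)) hFblock
      hEblock fun j hj => (hE j hj).ordConnected
  calc ∑ j ∈ range n, ‖B.proj (E j) y‖ ≤ ∑ j ∈ range n, C * meets j / k := sum_le_sum hproj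
    _ = C * (∑ j ∈ range n, (meets j : ℝ)) / k := by rw [← sum_div, ← mul_sum]
    _ ≤ C * (k + 2 * n) / k := by gcongr
    _ = C * (1 + 2 * (n : ℝ) / (k : ℝ)) := by field_simp

/-- if y is a C-ℓ₁ᵏ-average (w.r.t. a bimonotone transfinite basis) and
E_1 < ⋯ < E_n are successive intervals with n < k, then ∑ ‖E_i y‖ ≤ C(1 + 2n/k). -/
theorem ell1_average_interval_estimate {X : Type*} [NormedAddCommGroup X] [NormedSpace ℝ X]
    (γ : Ordinal) (B : TransfiniteBasis γ X) (hbimonotone : B.C = 1)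
    (k n : ℕ) (hk : 0 < k) (hn : n < k)
    (x : ℕ → X) (F : ℕ → Finset Ordinal) (C : ℝ)
    (hFsub : ∀ i, i < k → ↑(F i) ⊆ Set.Iio γ)
    (hFblock : ∀ i j : ℕ, i < j → j < k → ∀ a ∈ F i, ∀ b ∈ F j, a < b)
    (hxspan : ∀ i, i < k → x i ∈ Submodule.span ℝ (B.vec '' ↑(F i)))
    (hxC : ∀ i, i < k → ‖x i‖ ≤ C)
    (y : X) (hy : y = (k : ℝ)⁻¹ • ∑ i ∈ Finset.range k, x i) (hynorm : ‖y‖ = 1)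
    (E : ℕ → Set Ordinal) (hE : ∀ i, i < n → IsOrdInterval (E i))
    (hEblock : ∀ i j : ℕ, i < j → j < n → ∀ a ∈ E i, ∀ b ∈ E j, a < b) :
    ∑ i ∈ Finset.range n, ‖B.proj (E i) y‖ ≤ C * (1 + 2 * (n : ℝ) / (k : ℝ)) :=
  ell1_average_interval_estimate_general γ B hbimonotone k n hk x F C hFsub hFblock hxspan hxC y hy
    E hE hEblock
end

section
/- Let T be a finite rooted tree and (f_t)_{t∈T} an assignment of functionals such that each non-maximal node t of 'type I' has its children forming a block family. Let (x_k)_{k=1}^n be a block sequence and A ⊆ T an antichain such that for distinct t₁, t₂ ∈ A the meet t₁ ∧ t₂ is of type II. If t is a node of type I which is a splitter (for every k ∈ E_t there are at least two children s₁ ≠ s₂ of t with ran f_{s_i} ∩ ran x_k ≠ ∅), then #E_t ≤ #S_t − 1, where S_t is the set of children of t and E_t is the set of indices k whose antichain node above equals exactly t. -/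
/-- the counting estimate for splitter nodes in a tree-analysis. Let the children
of a type I node t have successive ranges R_1 < ⋯ < R_d (a block family), and let (x_k) be a
block sequence with successive ranges J_1 < ⋯ < J_n. If every index k in E_t is split by t,
i.e. at least two of the children ranges meet ran x_k, then #E_t ≤ #S_t − 1. -/
theorem splitter_card_estimate (n d : ℕ)
    (J : Fin n → Finset Ordinal) (R : Fin d → Finset Ordinal)
    (hJblock : ∀ k l : Fin n, k < l → ∀ a ∈ J k, ∀ b ∈ J l, a < b)
    (hRblock : ∀ i j : Fin d, i < j → ∀ a ∈ R i, ∀ b ∈ R j, a < b)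
    (E : Finset (Fin n))
    (hsplit : ∀ k ∈ E, ∃ i j : Fin d, i ≠ j ∧
      (R i ∩ J k).Nonempty ∧ (R j ∩ J k).Nonempty) :
    E.card ≤ d - 1 := by
  rcases Nat.eq_zero_or_pos d with hd | hd
  · subst hd
    rcases E.eq_empty_or_nonempty with rfl | ⟨k, hk⟩
    · simp
    · obtain ⟨i, -⟩ := hsplit k hk
      exact absurd i.2 (by simp)
  haveI : NeZero d := ⟨hd.ne'⟩
  set S : Fin n → Finset (Fin d) :=
    fun k => Finset.univ.filter (fun i => (R i ∩ J k).Nonempty) with hS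
  set f : Fin n → Fin d := fun k => (insert (0 : Fin d) (S k)).max' ⟨0, Finset.mem_insert_self _ _⟩
    with hf
  have hub : ∀ k, ∀ i ∈ S k, i ≤ f k := fun k i hi =>
    Finset.le_max' _ _ (Finset.mem_insert_of_mem hi)
  have hmemS : ∀ i (k : Fin n), i ∈ S k ↔ (R i ∩ J k).Nonempty := by
    intro i k; simp [hS]
  have hfpos : ∀ k ∈ E, 0 < f k := by
    intro k hk
    obtain ⟨i, j, hij, hiR, hjR⟩ := hsplit k hk
    have hi := hub k i ((hmemS i k).2 hiR)
    have hj := hub k j ((hmemS j k).2 hjR)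
    rcases eq_or_ne i 0 with h0 | h0
    · have : j ≠ 0 := fun e => hij (h0.trans e.symm)
      exact lt_of_lt_of_le (((Fin.zero_le j).lt_of_ne (Ne.symm this))) hj
    · exact lt_of_lt_of_le (((Fin.zero_le i).lt_of_ne (Ne.symm h0))) hi
  have hfmem : ∀ k ∈ E, f k ∈ S k := by
    intro k hk
    have : f k ∈ insert (0 : Fin d) (S k) := (insert (0 : Fin d) (S k)).max'_mem _
    rcases Finset.mem_insert.1 this with h | h
    · exact absurd h (hfpos k hk).ne'
    · exact h
  -- there is a second element strictly below f k
  have hsecond : ∀ k ∈ E, ∃ j ∈ S k, j < f k := by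
    intro k hk
    obtain ⟨i, j, hij, hiR, hjR⟩ := hsplit k hk
    have hi' : i ∈ S k := (hmemS i k).2 hiR
    have hj' : j ∈ S k := (hmemS j k).2 hjR
    rcases eq_or_lt_of_le (hub k i hi') with h | h
    · exact ⟨j, hj', lt_of_le_of_ne (hub k j hj') (fun e => hij (h.trans e.symm))⟩
    · exact ⟨i, hi', h⟩
  have key : E.card ≤ (Finset.univ.erase (0 : Fin d)).card := by
    apply Finset.card_le_card_of_injOn f
    · intro k hk
      exact Finset.mem_erase.2 ⟨(hfpos k hk).ne', Finset.mem_univ _⟩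
    · intro k hk l hl hkl
      by_contra hne
      rcases lt_or_gt_of_ne hne with hlt | hlt
      · obtain ⟨j, hj, hjlt⟩ := hsecond l hl
        obtain ⟨a, ha⟩ := (hmemS j l).1 hj
        obtain ⟨b, hb⟩ := (hmemS (f k) k).1 (hfmem k hk)
        rw [Finset.mem_inter] at ha hb
        have h1 : a < b := hRblock j (f k) (hkl ▸ hjlt) a ha.1 b hb.1
        have h2 : b < a := hJblock k l hlt b hb.2 a ha.2
        exact absurd (h1.trans h2) (lt_irrefl _)
      · obtain ⟨j, hj, hjlt⟩ := hsecond k hk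
        obtain ⟨a, ha⟩ := (hmemS j k).1 hj
        obtain ⟨b, hb⟩ := (hmemS (f l) l).1 (hfmem l hl)
        rw [Finset.mem_inter] at ha hb
        have h1 : a < b := hRblock j (f l) (hkl ▸ hjlt) a ha.1 b hb.1
        have h2 : b < a := hJblock l k hlt b hb.2 a ha.2
        exact absurd (h1.trans h2) (lt_irrefl _)
  calc E.card ≤ _ := key
    _ = d - 1 := by
      rw [Finset.card_erase_of_mem (Finset.mem_univ _), Finset.card_univ, Fintype.card_fin]
end

section
/- There exists a ρ-function ρ : [ω₁]² → ω (i.e., ρ satisfies the two ρ-function inequalities and the finiteness condition) such that for each limit ordinal λ < ω₁, setting F_n^λ = {β < λ : ρ(β,λ) ≤ n}, one has #F_n^λ/n → 0 as n → ∞. -/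
namespace SmoothRho

noncomputable section

open Set

attribute [local instance] Classical.propDecidable

/-- Good data at a limit stage: a strictly increasing cofinal ω-sequence `c` below `β`
and a strictly increasing "gap" function `g` growing fast enough w.r.t. the counting
functions of the previous levels. -/
def GoodData (β : Ordinal) (prev : Ordinal → Ordinal → ℕ)
    (c : ℕ → Ordinal) (g : ℕ → ℕ) : Prop :=
  StrictMono c ∧ (∀ n, c n < β) ∧ (∀ α, α < β → ∃ n, α ≤ c n) ∧ StrictMono g ∧
    ∀ k n, g k ≤ n → ∀ j ≤ k,
      ({α : Ordinal | α < c j ∧ prev α (c j) ≤ n}.ncard + 1) * (k + 1) ^ 2 ≤ n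

/-- A choice of good data (if it exists). -/
def limData (β : Ordinal) (prev : Ordinal → Ordinal → ℕ) : (ℕ → Ordinal) × (ℕ → ℕ) :=
  if h : ∃ p : (ℕ → Ordinal) × (ℕ → ℕ), GoodData β prev p.1 p.2 then h.choose
  else ⟨fun _ => 0, fun n => n⟩

/-- One step of the recursive construction of ρ. -/
def rstep (β : Ordinal) (prev : Ordinal → Ordinal → ℕ) (α : Ordinal) : ℕ :=
  if α < β ∧ β < omega1 then
    if Order.IsSuccLimit β then
      let c := (limData β prev).1
      let g := (limData β prev).2
      let k := sInf {n | α ≤ c n}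
      max (g k) (max (prev α (c k)) ((Finset.range k).sup fun i => prev (c i) α))
    else if α = Ordinal.pred β then 0 else prev α (Ordinal.pred β)
  else 0

/-- The columns of ρ, by well-founded recursion. -/
def rhoCol : Ordinal → Ordinal → ℕ :=
  WellFounded.fix wellFounded_lt
    (fun β ih => rstep β (fun x γ => if h : γ < β then ih γ h x else 0))

/-- The ρ-function. -/
def rho (α β : Ordinal) : ℕ := rhoCol β α

/-- The restriction of ρ below β, as a total function. -/
def prevRho (β : Ordinal) : Ordinal → Ordinal → ℕ := fun x γ => if γ < β then rho x γ else 0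

lemma rhoCol_eq (β : Ordinal) : rhoCol β = rstep β (prevRho β) := by
  show WellFounded.fix _ _ β = _
  rw [WellFounded.fix_eq]
  rfl

lemma rho_eq (α β : Ordinal) : rho α β = rstep β (prevRho β) α := by
  rw [rho, rhoCol_eq]

lemma rho_zero_of_le {α β : Ordinal} (h : β ≤ α) : rho α β = 0 := by
  rw [rho_eq, rstep, if_neg]; intro ⟨h1, _⟩; exact absurd h1 (not_lt.2 h)

lemma rho_self (α : Ordinal) : rho α α = 0 := rho_zero_of_le le_rfl

lemma rho_zero_of_not_lt_omega1 {α β : Ordinal} (h : ¬ β < omega1) : rho α β = 0 := by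
  rw [rho_eq, rstep, if_neg]; intro ⟨_, h2⟩; exact h h2

lemma prevRho_eq_rho {β x γ : Ordinal} (h : γ < β) : prevRho β x γ = rho x γ := if_pos h

lemma not_isLimit_succ (δ : Ordinal) : ¬ Order.IsSuccLimit (Order.succ δ) := by
  intro h
  exact absurd (h.succ_lt (Order.lt_succ δ)) (lt_irrefl _)

lemma rho_succ_self {δ : Ordinal} : rho δ (Order.succ δ) = 0 := by
  by_cases h : Order.succ δ < omega1
  · rw [rho_eq, rstep, if_pos ⟨Order.lt_succ δ, h⟩, if_neg (not_isLimit_succ δ),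
      if_pos (Ordinal.pred_succ δ).symm]
  · exact rho_zero_of_not_lt_omega1 h

lemma rho_succ {α δ : Ordinal} (hαδ : α < δ) (h : Order.succ δ < omega1) :
    rho α (Order.succ δ) = rho α δ := by
  rw [rho_eq, rstep, if_pos ⟨hαδ.trans (Order.lt_succ δ), h⟩, if_neg (not_isLimit_succ δ),
    if_neg (by rw [Ordinal.pred_succ]; exact hαδ.ne), Ordinal.pred_succ,
    prevRho_eq_rho (Order.lt_succ δ)]

/-- The chosen cofinal sequence at β. -/
def cseq (β : Ordinal) : ℕ → Ordinal := (limData β (prevRho β)).1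
/-- The chosen gap function at β. -/
def gseq (β : Ordinal) : ℕ → ℕ := (limData β (prevRho β)).2
/-- The index of the interval containing α. -/
def kIdx (β α : Ordinal) : ℕ := sInf {n | α ≤ cseq β n}

lemma limData_spec {β : Ordinal}
    (h : ∃ p : (ℕ → Ordinal) × (ℕ → ℕ), GoodData β (prevRho β) p.1 p.2) :
    GoodData β (prevRho β) (cseq β) (gseq β) := by
  rw [cseq, gseq, limData, dif_pos h]
  exact h.choose_spec

lemma rho_limit {β α : Ordinal} (hβ : β < omega1) (hl : Order.IsSuccLimit β) (hα : α < β) :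
    rho α β = max (gseq β (kIdx β α)) (max (prevRho β α (cseq β (kIdx β α)))
      ((Finset.range (kIdx β α)).sup fun i => prevRho β (cseq β i) α)) := by
  rw [rho_eq, rstep, if_pos ⟨hα, hβ⟩, if_pos hl]
  rfl


/-- The counting set at level β. -/
def FSet (β : Ordinal) (n : ℕ) : Set Ordinal := {α : Ordinal | α < β ∧ rho α β ≤ n}

/-- The bundle of inductive properties at level β. -/
def MainProp (β : Ordinal) : Prop :=
  (∀ α α', α < α' → α' < β → rho α β ≤ max (rho α α') (rho α' β)) ∧
  (∀ α α', α < α' → α' < β → rho α α' ≤ max (rho α β) (rho α' β)) ∧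
  (∀ n, (FSet β n).Finite) ∧
  (∀ K : ℕ, ∃ m : ℕ, ∀ n, m ≤ n → ((FSet β n).ncard + 1) * K ≤ n)

lemma FSet_prev_eq {β γ : Ordinal} (h : γ < β) (n : ℕ) :
    {α : Ordinal | α < γ ∧ prevRho β α γ ≤ n} = FSet γ n := by
  ext x; simp only [FSet, Set.mem_setOf_eq, prevRho_eq_rho h]

section LimitCase

variable {β : Ordinal}

lemma gd_c_mono (gd : GoodData β (prevRho β) (cseq β) (gseq β)) : StrictMono (cseq β) := gd.1
lemma gd_c_lt (gd : GoodData β (prevRho β) (cseq β) (gseq β)) : ∀ n, cseq β n < β := gd.2.1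
lemma gd_cof (gd : GoodData β (prevRho β) (cseq β) (gseq β)) :
    ∀ α, α < β → ∃ n, α ≤ cseq β n := gd.2.2.1
lemma gd_g_mono (gd : GoodData β (prevRho β) (cseq β) (gseq β)) : StrictMono (gseq β) :=
  gd.2.2.2.1
lemma gd_bound (gd : GoodData β (prevRho β) (cseq β) (gseq β)) :
    ∀ k n, gseq β k ≤ n → ∀ j ≤ k,
      ({α : Ordinal | α < cseq β j ∧ prevRho β α (cseq β j) ≤ n}.ncard + 1) * (k + 1) ^ 2 ≤ n :=
  gd.2.2.2.2

lemma le_c_kIdx (gd : GoodData β (prevRho β) (cseq β) (gseq β)) {α : Ordinal} (hα : α < β) :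
    α ≤ cseq β (kIdx β α) :=
  Nat.sInf_mem (gd_cof gd α hα)

lemma c_lt_of_lt_kIdx {α : Ordinal} {i : ℕ} (hi : i < kIdx β α) : cseq β i < α := by
  have := Nat.notMem_of_lt_sInf hi
  simpa [not_le] using this

lemma kIdx_mono (gd : GoodData β (prevRho β) (cseq β) (gseq β)) {α α' : Ordinal}
    (h : α ≤ α') (hα' : α' < β) : kIdx β α ≤ kIdx β α' :=
  Nat.sInf_le (h.trans (le_c_kIdx gd hα'))

lemma rho_limit' (hβ : β < omega1) (hl : Order.IsSuccLimit β)
    (gd : GoodData β (prevRho β) (cseq β) (gseq β)) {α : Ordinal} (hα : α < β) :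
    rho α β = max (gseq β (kIdx β α)) (max (rho α (cseq β (kIdx β α)))
      ((Finset.range (kIdx β α)).sup fun i => rho (cseq β i) α)) := by
  rw [rho_limit hβ hl hα, prevRho_eq_rho (gd_c_lt gd _)]
  congr 2
  exact Finset.sup_congr rfl fun i _ => prevRho_eq_rho hα

lemma g_le_rho (hβ : β < omega1) (hl : Order.IsSuccLimit β)
    (gd : GoodData β (prevRho β) (cseq β) (gseq β)) {α : Ordinal} (hα : α < β) :
    gseq β (kIdx β α) ≤ rho α β := by
  rw [rho_limit' hβ hl gd hα]; exact le_max_left _ _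

lemma rho_c_le_rho (hβ : β < omega1) (hl : Order.IsSuccLimit β)
    (gd : GoodData β (prevRho β) (cseq β) (gseq β)) {α : Ordinal} (hα : α < β) :
    rho α (cseq β (kIdx β α)) ≤ rho α β := by
  rw [rho_limit' hβ hl gd hα]; exact le_trans (le_max_left _ _) (le_max_right _ _)

lemma rho_ci_le_rho (hβ : β < omega1) (hl : Order.IsSuccLimit β)
    (gd : GoodData β (prevRho β) (cseq β) (gseq β)) {α : Ordinal} (hα : α < β)
    {i : ℕ} (hi : i < kIdx β α) : rho (cseq β i) α ≤ rho α β := by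
  rw [rho_limit' hβ hl gd hα]
  exact le_trans (Finset.le_sup (f := fun i => rho (cseq β i) α) (Finset.mem_range.2 hi))
    (le_max_of_le_right (le_max_right _ _))

lemma lim_sub1 (hβ : β < omega1) (hl : Order.IsSuccLimit β)
    (gd : GoodData β (prevRho β) (cseq β) (gseq β))
    (ihm : ∀ γ, γ < β → MainProp γ) :
    ∀ α α', α < α' → α' < β → rho α β ≤ max (rho α α') (rho α' β) := by
  intro α α' h1 h2
  have hα : α < β := h1.trans h2
  have hkl : kIdx β α ≤ kIdx β α' := kIdx_mono gd h1.le h2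
  rw [rho_limit' hβ hl gd hα]
  have hckβ : cseq β (kIdx β α) < β := gd_c_lt gd _
  refine max_le ?_ (max_le ?_ ?_)
  · exact le_trans ((gd_g_mono gd).monotone hkl)
      (le_trans (g_le_rho hβ hl gd h2) (le_max_right _ _))
  · -- rho α (c k) ≤ max (rho α α') (rho α' β)
    rcases lt_trichotomy α' (cseq β (kIdx β α)) with hlt | heq | hgt
    · -- α' < c k; then l = k
      have hkeq : kIdx β α' = kIdx β α := le_antisymm (Nat.sInf_le hlt.le) hkl
      have hs := (ihm (cseq β (kIdx β α)) hckβ).1 α α' h1 hlt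
      refine hs.trans (max_le (le_max_left _ _) ?_)
      have h4 : rho α' (cseq β (kIdx β α')) ≤ rho α' β := rho_c_le_rho hβ hl gd h2
      rw [hkeq] at h4
      exact h4.trans (le_max_right _ _)
    · rw [← heq]; exact le_max_left _ _
    · -- c k < α'; then k < l
      have hklt : kIdx β α < kIdx β α' := by
        by_contra hcon
        push_neg at hcon
        exact absurd ((le_c_kIdx gd h2).trans ((gd_c_mono gd).monotone hcon)) (not_le.2 hgt)
      rcases eq_or_lt_of_le (le_c_kIdx gd hα) with heq2 | hlt2
      · rw [← heq2, rho_self]; exact Nat.zero_le _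
      · have hs := (ihm α' h2).2.1 α (cseq β (kIdx β α)) hlt2 hgt
        refine hs.trans (max_le (le_max_left _ _) ?_)
        exact (rho_ci_le_rho hβ hl gd h2 hklt).trans (le_max_right _ _)
  · -- the sup term
    refine Finset.sup_le fun i hi => ?_
    rw [Finset.mem_range] at hi
    have hciα : cseq β i < α := c_lt_of_lt_kIdx hi
    have hs := (ihm α' h2).2.1 (cseq β i) α hciα h1
    refine hs.trans (max_le ?_ (le_max_left _ _))
    exact (rho_ci_le_rho hβ hl gd h2 (lt_of_lt_of_le hi hkl)).trans (le_max_right _ _)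

lemma lim_sub2 (hβ : β < omega1) (hl : Order.IsSuccLimit β)
    (gd : GoodData β (prevRho β) (cseq β) (gseq β))
    (ihm : ∀ γ, γ < β → MainProp γ) :
    ∀ α α', α < α' → α' < β → rho α α' ≤ max (rho α β) (rho α' β) := by
  intro α α' h1 h2
  have hα : α < β := h1.trans h2
  have hkl : kIdx β α ≤ kIdx β α' := kIdx_mono gd h1.le h2
  have hckβ : cseq β (kIdx β α) < β := gd_c_lt gd _
  rcases lt_trichotomy α' (cseq β (kIdx β α)) with hlt | heq | hgt
  · -- α' < c k, so l = k
    have hkeq : kIdx β α' = kIdx β α := le_antisymm (Nat.sInf_le hlt.le) hkl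
    have hs := (ihm (cseq β (kIdx β α)) hckβ).2.1 α α' h1 hlt
    refine hs.trans (max_le ?_ ?_)
    · exact (rho_c_le_rho hβ hl gd hα).trans (le_max_left _ _)
    · have h3 : rho α' (cseq β (kIdx β α')) ≤ rho α' β := rho_c_le_rho hβ hl gd h2
      rw [hkeq] at h3
      exact h3.trans (le_max_right _ _)
  · rw [heq]
    exact (rho_c_le_rho hβ hl gd hα).trans (le_max_left _ _)
  · -- c k < α', so k < l
    have hklt : kIdx β α < kIdx β α' := by
      by_contra hcon
      push_neg at hcon
      exact absurd ((le_c_kIdx gd h2).trans ((gd_c_mono gd).monotone hcon)) (not_le.2 hgt)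
    rcases eq_or_lt_of_le (le_c_kIdx gd hα) with heq2 | hlt2
    · have h5 : rho (cseq β (kIdx β α)) α' ≤ rho α' β := rho_ci_le_rho hβ hl gd h2 hklt
      rw [← heq2] at h5
      exact h5.trans (le_max_right _ _)
    · have hs := (ihm α' h2).1 α (cseq β (kIdx β α)) hlt2 hgt
      refine hs.trans (max_le ?_ ?_)
      · exact (rho_c_le_rho hβ hl gd hα).trans (le_max_left _ _)
      · exact (rho_ci_le_rho hβ hl gd h2 hklt).trans (le_max_right _ _)

/-- The cutoff index: least K with n < g K. -/
def KCut (β : Ordinal) (n : ℕ) : ℕ := sInf {K | n < gseq β K}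

lemma KCut_spec (gd : GoodData β (prevRho β) (cseq β) (gseq β)) (n : ℕ) :
    n < gseq β (KCut β n) :=
  Nat.sInf_mem (s := {K | n < gseq β K})
    ⟨n + 1, by
      have h9 : n + 1 ≤ gseq β (n + 1) := StrictMono.le_apply (gd_g_mono gd)
      simp only [Set.mem_setOf_eq]
      omega⟩

lemma lt_KCut (gd : GoodData β (prevRho β) (cseq β) (gseq β)) {n k : ℕ}
    (h : gseq β k ≤ n) : k < KCut β n := by
  by_contra hcon
  push_neg at hcon
  exact absurd ((gd_g_mono gd).monotone hcon |>.trans h) (not_le.2 (KCut_spec gd n))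

lemma lim_FSet_subset (hβ : β < omega1) (hl : Order.IsSuccLimit β)
    (gd : GoodData β (prevRho β) (cseq β) (gseq β)) (n : ℕ) :
    FSet β n ⊆ ⋃ j ∈ Finset.range (KCut β n), insert (cseq β j) (FSet (cseq β j) n) := by
  intro α hαmem
  obtain ⟨hα, hρ⟩ := hαmem
  set k := kIdx β α with hk
  have hgk : gseq β k ≤ n := le_trans (g_le_rho hβ hl gd hα) hρ
  have hkK : k < KCut β n := lt_KCut gd hgk
  have hαck : α ≤ cseq β k := le_c_kIdx gd hα
  have hρck : rho α (cseq β k) ≤ n := le_trans (rho_c_le_rho hβ hl gd hα) hρ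
  refine Set.mem_biUnion (Finset.mem_range.2 hkK) ?_
  rcases eq_or_lt_of_le hαck with heq | hlt
  · exact Or.inl heq
  · exact Or.inr ⟨hlt, hρck⟩

lemma ncard_biUnion_le_sum (S : ℕ → Set Ordinal) (K : ℕ) :
    (⋃ j ∈ Finset.range K, S j).ncard ≤ ∑ j ∈ Finset.range K, (S j).ncard := by
  induction K with
  | zero => simp
  | succ K ihK =>
      rw [Finset.range_add_one]
      have h1 : (⋃ j ∈ insert K (Finset.range K), S j) = S K ∪ ⋃ j ∈ Finset.range K, S j := by
        simp [Set.biUnion_insert]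
      rw [h1, Finset.sum_insert Finset.notMem_range_self]
      exact le_trans (Set.ncard_union_le _ _) (by omega)

lemma lim_fin (hβ : β < omega1) (hl : Order.IsSuccLimit β)
    (gd : GoodData β (prevRho β) (cseq β) (gseq β))
    (ihm : ∀ γ, γ < β → MainProp γ) (n : ℕ) : (FSet β n).Finite := by
  refine Set.Finite.subset ?_ (lim_FSet_subset hβ hl gd n)
  refine Set.Finite.biUnion (Finset.finite_toSet _) fun j _ => ?_
  exact Set.Finite.insert _ ((ihm (cseq β j) (gd_c_lt gd j)).2.2.1 n)

lemma lim_card_bound (hβ : β < omega1) (hl : Order.IsSuccLimit β)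
    (gd : GoodData β (prevRho β) (cseq β) (gseq β))
    (ihm : ∀ γ, γ < β → MainProp γ) (n : ℕ) :
    (FSet β n).ncard ≤ ∑ j ∈ Finset.range (KCut β n), ((FSet (cseq β j) n).ncard + 1) := by
  have hfin : (⋃ j ∈ Finset.range (KCut β n), insert (cseq β j) (FSet (cseq β j) n)).Finite :=
    Set.Finite.biUnion (Finset.finite_toSet _) fun j _ =>
      Set.Finite.insert _ ((ihm (cseq β j) (gd_c_lt gd j)).2.2.1 n)
  have h1 : (FSet β n).ncard ≤
      (⋃ j ∈ Finset.range (KCut β n), insert (cseq β j) (FSet (cseq β j) n)).ncard :=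
    Set.ncard_le_ncard (lim_FSet_subset hβ hl gd n) hfin
  refine h1.trans ?_
  refine (ncard_biUnion_le_sum _ _).trans ?_
  refine Finset.sum_le_sum fun j _ => ?_
  exact Set.ncard_insert_le _ _

lemma lim_smooth (hβ : β < omega1) (hl : Order.IsSuccLimit β)
    (gd : GoodData β (prevRho β) (cseq β) (gseq β))
    (ihm : ∀ γ, γ < β → MainProp γ) :
    ∀ K : ℕ, ∃ m : ℕ, ∀ n, m ≤ n → ((FSet β n).ncard + 1) * K ≤ n := by
  intro K0
  refine ⟨max (gseq β (2 * K0)) (2 * K0), fun n hn => ?_⟩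
  have hn1 : gseq β (2 * K0) ≤ n := le_trans (le_max_left _ _) hn
  have hn2 : 2 * K0 ≤ n := le_trans (le_max_right _ _) hn
  have hKgt : 2 * K0 < KCut β n := lt_KCut gd hn1
  have hKpos : 0 < KCut β n := by omega
  have hgK1 : gseq β (KCut β n - 1) ≤ n := by
    by_contra hcon
    push_neg at hcon
    have h6 := Nat.sInf_le (show KCut β n - 1 ∈ {K | n < gseq β K} from hcon)
    change KCut β n ≤ KCut β n - 1 at h6
    omega
  have hterm : ∀ j < KCut β n, ((FSet (cseq β j) n).ncard + 1) * (KCut β n) ^ 2 ≤ n := by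
    intro j hj
    have h7 := gd_bound gd (KCut β n - 1) n hgK1 j (by omega)
    rwa [FSet_prev_eq (gd_c_lt gd j), Nat.sub_add_cancel hKpos] at h7
  have hsum : (∑ j ∈ Finset.range (KCut β n), ((FSet (cseq β j) n).ncard + 1)) *
      (KCut β n) ^ 2 ≤ KCut β n * n := by
    rw [Finset.sum_mul]
    calc ∑ j ∈ Finset.range (KCut β n), ((FSet (cseq β j) n).ncard + 1) * (KCut β n) ^ 2
        ≤ ∑ _j ∈ Finset.range (KCut β n), n :=
          Finset.sum_le_sum fun j hj => hterm j (Finset.mem_range.1 hj)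
      _ = KCut β n * n := by rw [Finset.sum_const, Finset.card_range, smul_eq_mul]
  have hcard : (FSet β n).ncard * KCut β n ≤ n := by
    have h2 : (FSet β n).ncard * KCut β n * KCut β n ≤ n * KCut β n := by
      calc (FSet β n).ncard * KCut β n * KCut β n
          ≤ (∑ j ∈ Finset.range (KCut β n), ((FSet (cseq β j) n).ncard + 1)) *
              KCut β n * KCut β n :=
            Nat.mul_le_mul (Nat.mul_le_mul (lim_card_bound hβ hl gd ihm n) le_rfl) le_rfl
        _ = (∑ j ∈ Finset.range (KCut β n), ((FSet (cseq β j) n).ncard + 1)) *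
              (KCut β n) ^ 2 := by ring
        _ ≤ KCut β n * n := hsum
        _ = n * KCut β n := Nat.mul_comm _ _
    exact Nat.le_of_mul_le_mul_right h2 hKpos
  have hfinal : 2 * (((FSet β n).ncard + 1) * K0) ≤ 2 * n := by
    have h8 : (FSet β n).ncard * (2 * K0) ≤ n := by
      calc (FSet β n).ncard * (2 * K0) ≤ (FSet β n).ncard * KCut β n :=
            Nat.mul_le_mul_left _ (by omega)
        _ ≤ n := hcard
    calc 2 * (((FSet β n).ncard + 1) * K0) = (FSet β n).ncard * (2 * K0) + 2 * K0 := by ring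
      _ ≤ n + n := Nat.add_le_add h8 hn2
      _ = 2 * n := by ring
  exact Nat.le_of_mul_le_mul_left hfinal (by norm_num)

lemma exists_goodData (hβ : β < omega1) (hl : Order.IsSuccLimit β)
    (ihm : ∀ γ, γ < β → MainProp γ) :
    ∃ p : (ℕ → Ordinal) × (ℕ → ℕ), GoodData β (prevRho β) p.1 p.2 := by
  -- countability of Iio β
  have hcount : Countable (Set.Iio β) := by
    have h10 : β.card < Cardinal.aleph 1 := Cardinal.lt_ord.1 hβ
    rw [← Cardinal.succ_aleph0, Order.lt_succ_iff] at h10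
    rw [← Cardinal.mk_le_aleph0_iff, Ordinal.mk_Iio_ordinal, Cardinal.lift_le_aleph0]
    exact h10
  have hne : Nonempty (Set.Iio β) := ⟨⟨0, hl.pos⟩⟩
  obtain ⟨e, he⟩ := exists_surjective_nat (Set.Iio β)
  -- build c
  let c : ℕ → Ordinal := fun n => Nat.rec (e 0).val (fun n cn => max (e (n + 1)).val (Order.succ cn)) n
  have hc_succ : ∀ n, c (n + 1) = max (e (n + 1)).val (Order.succ (c n)) := fun n => rfl
  have hclt : ∀ n, c n < β := by
    intro n
    induction n with
    | zero => exact (e 0).2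
    | succ n ihn =>
        rw [hc_succ]
        exact max_lt (e (n + 1)).2 (hl.succ_lt ihn)
  have hcmono : StrictMono c := by
    apply strictMono_nat_of_lt_succ
    intro n
    rw [hc_succ]
    exact lt_of_lt_of_le (Order.lt_succ _) (le_max_right _ _)
  have hecle : ∀ n, (e n).val ≤ c n := by
    intro n
    cases n with
    | zero => exact le_rfl
    | succ n => rw [hc_succ]; exact le_max_left _ _
  have hcof : ∀ α, α < β → ∃ n, α ≤ c n := by
    intro α hα
    obtain ⟨n, hn⟩ := he ⟨α, hα⟩
    refine ⟨n, ?_⟩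
    have h11 := hecle n
    rw [hn] at h11
    exact h11
  -- build g
  have hsp : ∀ j k : ℕ, ∃ m : ℕ, ∀ n, m ≤ n →
      ((FSet (c j) n).ncard + 1) * (k + 1) ^ 2 ≤ n :=
    fun j k => (ihm (c j) (hclt j)).2.2.2 ((k + 1) ^ 2)
  choose m hm using hsp
  let M : ℕ → ℕ := fun k => (Finset.range (k + 1)).sup fun j => m j k
  let g : ℕ → ℕ := fun k => Nat.rec (M 0) (fun k gk => max (gk + 1) (M (k + 1))) k
  have hg_succ : ∀ k, g (k + 1) = max (g k + 1) (M (k + 1)) := fun k => rfl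
  have hgmono : StrictMono g := by
    apply strictMono_nat_of_lt_succ
    intro k
    rw [hg_succ]
    exact lt_of_lt_of_le (Nat.lt_succ_self _) (le_max_left _ _)
  have hgM : ∀ k, M k ≤ g k := by
    intro k
    cases k with
    | zero => exact le_rfl
    | succ k => rw [hg_succ]; exact le_max_right _ _
  refine ⟨⟨c, g⟩, hcmono, hclt, hcof, hgmono, ?_⟩
  intro k n hkn j hj
  rw [FSet_prev_eq (hclt j)]
  have hmjk : m j k ≤ M k :=
    Finset.le_sup (f := fun j => m j k) (Finset.mem_range.2 (Nat.lt_succ_of_le hj))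
  exact hm j k n (le_trans (le_trans hmjk (hgM k)) hkn)

end LimitCase

/-- The main inductive lemma: all properties hold at every level below ω₁. -/
lemma main : ∀ β : Ordinal, β < omega1 → MainProp β := by
  intro β
  induction β using Ordinal.induction with
  | _ β ih =>
  intro hβ
  rcases Ordinal.zero_or_succ_or_isSuccLimit β with h0 | ⟨δ, hδ⟩ | hl
  · -- zero case
    subst h0
    have hempty : ∀ n : ℕ, FSet 0 n = ∅ := by
      intro n; ext x; simp [FSet, not_lt.2 (zero_le (a := x))]
    refine ⟨?_, ?_, ?_, ?_⟩
    · intro α α' _ h2; exact absurd h2 (not_lt.2 (zero_le (a := α')))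
    · intro α α' _ h2; exact absurd h2 (not_lt.2 (zero_le (a := α')))
    · intro n; rw [hempty]; exact Set.finite_empty
    · intro K
      refine ⟨K, fun n hn => ?_⟩
      rw [hempty, Set.ncard_empty]
      simpa using hn
  · -- successor case
    subst hδ
    have hδω : δ < omega1 := (Order.lt_succ δ).trans hβ
    have ihδ := ih δ (Order.lt_succ δ) hδω
    have hFS : ∀ n, FSet (Order.succ δ) n = insert δ (FSet δ n) := by
      intro n; ext x
      simp only [FSet, Set.mem_setOf_eq, Set.mem_insert_iff]
      constructor
      · rintro ⟨hx, hρ⟩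
        rcases lt_or_eq_of_le (Order.lt_succ_iff.1 hx) with hlt | heq
        · exact Or.inr ⟨hlt, by rwa [rho_succ hlt hβ] at hρ⟩
        · exact Or.inl heq
      · rintro (rfl | ⟨hx, hρ⟩)
        · exact ⟨Order.lt_succ x, by rw [rho_succ_self]; exact Nat.zero_le n⟩
        · exact ⟨hx.trans (Order.lt_succ δ), by rwa [rho_succ hx hβ]⟩
    refine ⟨?_, ?_, ?_, ?_⟩
    · intro α α' h1 h2
      rcases lt_or_eq_of_le (Order.lt_succ_iff.1 h2) with hlt | heq
      · rw [rho_succ (h1.trans hlt) hβ, rho_succ hlt hβ]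
        exact ihδ.1 α α' h1 hlt
      · subst heq
        rw [rho_succ h1 hβ]
        exact le_max_left _ _
    · intro α α' h1 h2
      rcases lt_or_eq_of_le (Order.lt_succ_iff.1 h2) with hlt | heq
      · rw [rho_succ (h1.trans hlt) hβ, rho_succ hlt hβ]
        exact ihδ.2.1 α α' h1 hlt
      · subst heq
        rw [rho_succ h1 hβ]
        exact le_max_left _ _
    · intro n; rw [hFS]; exact (ihδ.2.2.1 n).insert δ
    · intro K
      obtain ⟨m, hm⟩ := ihδ.2.2.2 (2 * K)
      refine ⟨m, fun n hn => ?_⟩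
      have h1 := hm n hn
      have h2 : (FSet (Order.succ δ) n).ncard ≤ (FSet δ n).ncard + 1 := by
        rw [hFS]; exact Set.ncard_insert_le _ _
      calc ((FSet (Order.succ δ) n).ncard + 1) * K
          ≤ (2 * ((FSet δ n).ncard + 1)) * K := Nat.mul_le_mul_right _ (by omega)
        _ = ((FSet δ n).ncard + 1) * (2 * K) := by ring
        _ ≤ n := h1
  · -- limit case
    have ihm : ∀ γ, γ < β → MainProp γ := fun γ hγ => ih γ hγ (hγ.trans hβ)
    have gd := limData_spec (exists_goodData hβ hl ihm)
    exact ⟨lim_sub1 hβ hl gd ihm, lim_sub2 hβ hl gd ihm,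
      lim_fin hβ hl gd ihm, lim_smooth hβ hl gd ihm⟩

end

end SmoothRho

/-- there exists a smooth ρ-function: for every limit ordinal λ < ω₁, setting
F_n^λ = {β < λ : ρ(β,λ) ≤ n}, one has #F_n^λ / n → 0. -/
theorem exists_smooth_rhoFunction :
    ∃ ρ : Ordinal → Ordinal → ℕ, IsRhoFunction ρ ∧
      ∀ lam : Ordinal, lam < omega1 → Order.IsSuccLimit lam →
        Filter.Tendsto
          (fun n : ℕ => (({β : Ordinal | β < lam ∧ ρ β lam ≤ n}.ncard : ℝ) / (n : ℝ)))
          Filter.atTop (nhds 0) := by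
  refine ⟨SmoothRho.rho, ⟨SmoothRho.rho_self, ?_, ?_, ?_⟩, ?_⟩
  · intro α β γ h1 h2 h3; exact (SmoothRho.main γ h3).1 α β h1 h2
  · intro α β γ h1 h2 h3; exact (SmoothRho.main γ h3).2.1 α β h1 h2
  · intro β hβ n; exact (SmoothRho.main β hβ).2.2.1 n
  · intro lam hlam _hliml
    have sp := (SmoothRho.main lam hlam).2.2.2
    rw [Metric.tendsto_atTop]
    intro ε hε
    obtain ⟨K, hK⟩ := exists_nat_gt (1 / ε)
    obtain ⟨m, hm⟩ := sp K
    refine ⟨max m 1, fun n hn => ?_⟩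
    have hn1 : m ≤ n := le_trans (le_max_left _ _) hn
    have hn2 : 1 ≤ n := le_trans (le_max_right _ _) hn
    have h1 : ({β : Ordinal | β < lam ∧ SmoothRho.rho β lam ≤ n}.ncard + 1) * K ≤ n := hm n hn1
    set f := {β : Ordinal | β < lam ∧ SmoothRho.rho β lam ≤ n}.ncard with hf
    have hnpos : (0:ℝ) < n := by exact_mod_cast Nat.lt_of_lt_of_le Nat.zero_lt_one hn2
    have hεK : 1 < (K:ℝ) * ε := by
      have := (div_lt_iff₀ hε).1 hK
      linarith
    have hKpos : (0:ℝ) < K := by nlinarith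
    have hfK : (f:ℝ) * K ≤ n := by
      have h3 : f * K ≤ n := le_trans (Nat.mul_le_mul_right K (Nat.le_succ f)) h1
      exact_mod_cast h3
    have hdiv : (f:ℝ) / n ≤ 1 / K := by
      rw [div_le_div_iff₀ hnpos hKpos]
      linarith
    have hlast : (1:ℝ) / K < ε := by
      rw [div_lt_iff₀ hKpos]
      linarith
    rw [Real.dist_eq, sub_zero, abs_of_nonneg (by positivity)]
    exact lt_of_le_of_lt hdiv hlast
end
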